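/- Let k be a positive integer, let G be a connected finite graph, and let H be a connected spanning subgraph of G. Then \u03b3^\u221e_{all,k}(G) \u2264 \u03b3^\u221e_{all,k}(H); in particular, the eternal distance-k domination number of a connected graph is at most that of any of its spanning trees. -/

import Mathlib

open SimpleGraph

universe u v

namespace EternalDom

variable {V : Type u} {W : Type v}

/-- `x` is within distance `k` of `y` in `G` (in particular, a path between them exists). -/
def WithinDist (G : SimpleGraph V) (k : ℕ) (x y : V) : Prop :=
  G.Reachable x y ∧ G.dist x y ≤ k

/-- A multiset of guards is distance-`k` dominating: every vertex is within
distance `k` of some guard. -/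
def IsDistKDomMultiset (G : SimpleGraph V) (k : ℕ) (D : Multiset V) : Prop :=
  ∀ w : V, ∃ x ∈ D, WithinDist G k x w

/-- `F` is an eternal distance-`k` defence family of guard configurations of size `m`:
a nonempty family of distance-`k` dominating multisets, all of cardinality `m`, such that
for every configuration `D ∈ F` and every attacked vertex `w` there is a configuration
`D' ∈ F` containing `w` that is obtained from `D` by a matching (bijection) moving each
guard a distance of at most `k`. -/
def IsEternalFamily (G : SimpleGraph V) (k m : ℕ) (F : Set (Multiset V)) : Prop :=
  F.Nonempty ∧
    (∀ D ∈ F, Multiset.card D = m ∧ IsDistKDomMultiset G k D) ∧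
    (∀ D ∈ F, ∀ w : V, ∃ D' ∈ F, w ∈ D' ∧ Multiset.Rel (WithinDist G k) D D')

/-- The eternal distance-`k` domination number `γ^∞_{all,k}(G)`. -/
noncomputable def eternalNum (G : SimpleGraph V) (k : ℕ) : ℕ :=
  sInf {m | ∃ F : Set (Multiset V), IsEternalFamily G k m F}

/-- `x` dominates `w`: they are equal or adjacent. -/
def Dominates (G : SimpleGraph V) (x w : V) : Prop := w = x ∨ G.Adj x w

/-- A dominating set of vertices. -/
def IsDomSet (G : SimpleGraph V) (D : Set V) : Prop := ∀ w : V, ∃ x ∈ D, Dominates G x w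

/-- The domination number `γ(G)`. -/
noncomputable def domNum (G : SimpleGraph V) : ℕ :=
  sInf {n | ∃ D : Set V, IsDomSet G D ∧ D.ncard = n}

/-- A distance-`k` dominating set of vertices. -/
def IsDistKDomSet (G : SimpleGraph V) (k : ℕ) (D : Set V) : Prop :=
  ∀ w : V, ∃ x ∈ D, WithinDist G k x w

/-- The distance-`k` domination number `γ_k(G)`. -/
noncomputable def distDomNum (G : SimpleGraph V) (k : ℕ) : ℕ :=
  sInf {n | ∃ D : Set V, IsDistKDomSet G k D ∧ D.ncard = n}

/-- A leaf: a vertex of degree 1, i.e. with a unique neighbour. -/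
def IsLeafV (G : SimpleGraph V) (x : V) : Prop := ∃! y, G.Adj x y

/-- A stem: a vertex adjacent to at least one leaf. -/
def IsStem (G : SimpleGraph V) (x : V) : Prop := ∃ y, G.Adj x y ∧ IsLeafV G y

/-- `k`-leaves: a `0`-leaf is a leaf; for `k > 0`, `v` is a `k`-leaf iff `v` is adjacent to
some `(k-1)`-leaf and all but at most one of the neighbours of `v` are `t`-leaves for some
`t < k`. -/
def IsKLeaf (G : SimpleGraph V) : ℕ → V → Prop
  | 0, v => IsLeafV G v
  | (k + 1), v =>
      (∃ u, G.Adj v u ∧ IsKLeaf G k u) ∧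
        ∃ w : V, ∀ x : V, G.Adj v x → x ≠ w → ∃ t, ∃ _ : t ≤ k, IsKLeaf G t x
  termination_by k _ => k
  decreasing_by all_goals omega

/-- For a 2-leaf `v`, the set `L(v)`: the union of `L[u]` over all neighbours `u` of `v`
which are 0-leaves or 1-leaves, where for a 1-leaf `u`, `L[u]` consists of `u` and the leaves
adjacent to `u`. -/
def Lopen (G : SimpleGraph V) (v : V) : Set V :=
  {x | ∃ u, G.Adj v u ∧
    ((IsKLeaf G 0 u ∧ x = u) ∨
      (IsKLeaf G 1 u ∧ (x = u ∨ (G.Adj u x ∧ IsKLeaf G 0 x))))}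

/-- For a 2-leaf `v`, the set `L[v] = L(v) ∪ {v}`. -/
def Lclosed (G : SimpleGraph V) (v : V) : Set V := insert v (Lopen G v)

/-- A graph is eternal distance-2 domination critical if deleting any non-cut vertex
(one whose removal leaves the graph connected) strictly decreases the eternal
distance-2 domination number. -/
def EternalCritical (G : SimpleGraph V) : Prop :=
  ∀ x : V, (G.induce {y | y ≠ x}).Connected →
    eternalNum (G.induce {y | y ≠ x}) 2 < eternalNum G 2

/-- Attach a pendant path `x₁ x₂ … xₙ` on `n` new vertices to the vertex `y`,
via the edge `y x₁`. -/
def attachPath (G : SimpleGraph V) (y : V) (n : ℕ) : SimpleGraph (V ⊕ Fin n) :=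
  G.map Sum.inl ⊔ (pathGraph n).map Sum.inr ⊔
    fromEdgeSet {e | ∃ h : 0 < n, e = s(Sum.inl y, Sum.inr ⟨0, h⟩)}

/-- The star `K_{1,m}`: centre `0`, leaves the `m` nonzero elements of `Fin (m+1)`. -/
def starGraph (m : ℕ) : SimpleGraph (Fin (m + 1)) where
  Adj x y := (x = 0 ∧ y ≠ 0) ∨ (y = 0 ∧ x ≠ 0)
  symm := ⟨by tauto⟩
  loopless := ⟨by rintro x (⟨h1, h2⟩ | ⟨h1, h2⟩) <;> exact h2 h1⟩

/-- Disjoint union of `G` and the star `K_{1,m}` together with one edge joining the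
vertex `a` of the star to the vertex `y` of `G`. -/
def attachStar (G : SimpleGraph V) (y : V) (m : ℕ) (a : Fin (m + 1)) :
    SimpleGraph (V ⊕ Fin (m + 1)) :=
  G.map Sum.inl ⊔ (starGraph m).map Sum.inr ⊔
    fromEdgeSet {s(Sum.inl y, Sum.inr a)}

/-- From `G` and a vertex `v`: add a new star `K_{1,m}` joined by an edge from its centre
to `v`, together with `t` new leaves adjacent to `v`. -/
def addStarAndLeaves (G : SimpleGraph V) (v : V) (m t : ℕ) :
    SimpleGraph (V ⊕ (Fin (m + 1) ⊕ Fin t)) :=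
  G.map Sum.inl ⊔
    (starGraph m).map (Sum.inr ∘ Sum.inl) ⊔
    fromEdgeSet ({s(Sum.inl v, Sum.inr (Sum.inl 0))} ∪
      {e | ∃ i : Fin t, e = s(Sum.inl v, Sum.inr (Sum.inr i))})

/-- From `G` and a vertex `v`: add two new stars `K_{1,m}` and `K_{1,M}`, joining the
centre of each new star to `v` by an edge. -/
def addTwoStars (G : SimpleGraph V) (v : V) (m M : ℕ) :
    SimpleGraph (V ⊕ (Fin (m + 1) ⊕ Fin (M + 1))) :=
  G.map Sum.inl ⊔
    (starGraph m).map (Sum.inr ∘ Sum.inl) ⊔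
    (starGraph M).map (Sum.inr ∘ Sum.inr) ⊔
    fromEdgeSet {s(Sum.inl v, Sum.inr (Sum.inl 0)), s(Sum.inl v, Sum.inr (Sum.inr 0))}

/-- The 1-sum of `G` and `H` at the vertex `u` of `G` and the vertex `w` of `H`:
the disjoint union of `G` and `H` with `u` and `w` identified. -/
def oneSum (G : SimpleGraph V) (H : SimpleGraph W) (u : V) (w : W) :
    SimpleGraph (V ⊕ {x : W // x ≠ w}) where
  Adj x y :=
    match x, y with
    | Sum.inl a, Sum.inl b => G.Adj a b
    | Sum.inr a, Sum.inr b => H.Adj a.1 b.1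
    | Sum.inl a, Sum.inr b => a = u ∧ H.Adj w b.1
    | Sum.inr a, Sum.inl b => b = u ∧ H.Adj w a.1
  symm := ⟨by
    rintro (a | a) (b | b) h
    · exact h.symm
    · exact h
    · exact h
    · exact h.symm⟩
  loopless := ⟨by
    rintro (a | a) h
    · exact G.loopless.irrefl a h
    · exact H.loopless.irrefl a.1 h⟩

/-! Distances in `G` are at most those in its subgraph `H`, so every eternal defence family of
`H` is one of `G`. Since `V` is finite, placing a guard on every vertex gives an eternal family,
so the infimum defining `eternalNum H k` is attained rather than the junk value `sInf ∅ = 0`. -/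

theorem WithinDist.mono {G H : SimpleGraph V} (hHG : H ≤ G) {k : ℕ} {x y : V}
    (h : WithinDist H k x y) : WithinDist G k x y :=
  ⟨h.1.mono hHG, (h.1.dist_anti hHG).trans h.2⟩

theorem IsEternalFamily.mono {G H : SimpleGraph V} (hHG : H ≤ G) {k m : ℕ}
    {F : Set (Multiset V)} (hF : IsEternalFamily H k m F) : IsEternalFamily G k m F := by
  obtain ⟨hne, hdom, hmove⟩ := hF
  refine ⟨hne, fun D hD => ⟨(hdom D hD).1, fun w => ?_⟩, fun D hD w => ?_⟩
  · obtain ⟨x, hx, hxw⟩ := (hdom D hD).2 w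
    exact ⟨x, hx, hxw.mono hHG⟩
  · obtain ⟨D', hD', hwD', hrel⟩ := hmove D hD w
    exact ⟨D', hD', hwD', hrel.mono fun _ _ _ _ h => h.mono hHG⟩

theorem withinDist_self (G : SimpleGraph V) (k : ℕ) (x : V) : WithinDist G k x x :=
  ⟨.refl x, by simp⟩

theorem isEternalFamily_univ [Fintype V] (G : SimpleGraph V) (k : ℕ) :
    IsEternalFamily G k (Fintype.card V) {Finset.univ.val} := by
  refine ⟨Set.singleton_nonempty _, ?_, ?_⟩
  · rintro D rfl
    exact ⟨rfl, fun w => ⟨w, Finset.mem_univ w, withinDist_self G k w⟩⟩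
  · rintro D rfl w
    exact ⟨_, rfl, Finset.mem_univ w,
      Multiset.rel_refl_of_refl_on fun x _ => withinDist_self G k x⟩

theorem exists_isEternalFamily_eternalNum [Fintype V] (G : SimpleGraph V) (k : ℕ) :
    ∃ F, IsEternalFamily G k (eternalNum G k) F :=
  Nat.sInf_mem (s := {m | ∃ F, IsEternalFamily G k m F}) ⟨_, _, isEternalFamily_univ G k⟩

theorem eternalNum_anti [Fintype V] {G H : SimpleGraph V} (hHG : H ≤ G) (k : ℕ) :
    eternalNum G k ≤ eternalNum H k := by
  obtain ⟨F, hF⟩ := exists_isEternalFamily_eternalNum H k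
  exact Nat.sInf_le ⟨F, hF.mono hHG⟩

theorem eternalNum_le_of_spanning_general {V : Type u} [Fintype V] (G H : SimpleGraph V)
    (hHG : H ≤ G) (k : ℕ) :
    eternalNum G k ≤ eternalNum H k ∧
    (∀ T : SimpleGraph V, T ≤ G → T.IsTree → eternalNum G k ≤ eternalNum T k) :=
  ⟨eternalNum_anti hHG k, fun _ hTG _ => eternalNum_anti hTG k⟩

/-- the eternal distance-`k` domination number of a connected graph is at
most that of any connected spanning subgraph; in particular, at most that of any spanning
tree. -/
theorem eternalNum_le_of_spanning {V : Type u} [Fintype V] (G H : SimpleGraph V)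
    (hHG : H ≤ G) (hG : G.Connected) (hH : H.Connected) (k : ℕ) (hk : 0 < k) :
    eternalNum G k ≤ eternalNum H k ∧
    (∀ T : SimpleGraph V, T ≤ G → T.IsTree → eternalNum G k ≤ eternalNum T k) :=
  eternalNum_le_of_spanning_general G H hHG k

end EternalDom
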